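/- Energy estimate for the Hermite spectral viscosity scheme with viscosity term ε L_α v (Lemma on apriori estimates): Let α > 0, T > 0, ε > 0, N ≥ 0 an integer, f ∈ C¹(ℝ) with f(0) = 0 admitting a C¹ primitive F̄ of y ↦ y f'(y), and u₀ ∈ L²(ℝ). Suppose v : [0,T] → R_N is of the form v(t) = Σ_{k=0}^N v̂_k(t) H_k^α with each v̂_k differentiable on [0,T], v(0) = P_N u₀, and for every t ∈ [0,T] and every φ ∈ R_N: ∫_ℝ (∂_t v)(t,x) φ(x) dx + ∫_ℝ ∂_x(P_{N+1}(f∘v(t)))(x) φ(x) dx + ε ∫_ℝ (L_α v(t))(x) φ(x) dx = 0. Then ‖v(T)‖² + 2ε ∫_0^T ‖D_x v(t)‖² dt ≤ ‖P_N u₀‖² ≤ ‖u₀‖²; in particular ‖v(t)‖ ≤ ‖u₀‖ for t = T and ∫_0^T ‖D_x v(t)‖² dt ≤ ‖u₀‖²/(2ε). -/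

import Mathlib

open MeasureTheory Real

/-- Physicists' Hermite polynomial: `ℋ_n(x) = (−1)^n e^{x²} (dⁿ/dxⁿ) e^{−x²}`. -/
noncomputable def physHermite (n : ℕ) : ℝ → ℝ :=
  fun x => (-1 : ℝ) ^ n * Real.exp (x ^ 2) * iteratedDeriv n (fun y => Real.exp (-(y ^ 2))) x

/-- Generalized Hermite function `H_n^α(x) = (α/(2^n n! √π))^{1/2} ℋ_n(αx) e^{−α²x²/2}`. -/
noncomputable def genHermite (α : ℝ) (n : ℕ) : ℝ → ℝ :=
  fun x => Real.sqrt (α / (2 ^ n * n.factorial * Real.sqrt Real.pi)) *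
    physHermite n (α * x) * Real.exp (-(α ^ 2 * x ^ 2) / 2)

/-- Integer-indexed generalized Hermite function, with the convention `H_n^α ≡ 0` for `n < 0`. -/
noncomputable def genHermiteZ (α : ℝ) (n : ℤ) : ℝ → ℝ :=
  fun x => if 0 ≤ n then genHermite α n.toNat x else 0

/-- The operator `D_x = ∂_x + α² x`. -/
noncomputable def Dx (α : ℝ) (u : ℝ → ℝ) : ℝ → ℝ :=
  fun x => deriv u x + α ^ 2 * x * u x

/-- The Sturm–Liouville operator
`L_α(u)(x) = −e^{α²x²/2} ∂_x(e^{−α²x²} ∂_x(e^{α²x²/2} u(x)))`. -/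
noncomputable def SLop (α : ℝ) (u : ℝ → ℝ) : ℝ → ℝ :=
  fun x => -(Real.exp (α ^ 2 * x ^ 2 / 2) *
    deriv (fun y => Real.exp (-(α ^ 2 * y ^ 2)) *
      deriv (fun z => Real.exp (α ^ 2 * z ^ 2 / 2) * u z) y) x)

/-!
Test the scheme with `φ = v(t)` itself. The flux term vanishes: integrating by parts moves `∂ₓ`
onto `v`, the projection `P_{N+1}` can then be dropped because `∂ₓ v ∈ R_{N+1}`, and
`f(v) ∂ₓ v = ∂ₓ Φ(v)` for a primitive `Φ` of `f`, with `v` decaying at `±∞`. In the orthonormal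
basis `H_k^α` the viscosity term is `ε ∫ L_α v · v = ε ‖D_x v‖² = ε ∑ 2kα² v̂_k²`, because
`H_k^α` is an eigenfunction of `L_α` with eigenvalue `2kα²` and
`D_x H_k^α = 2α √(k/2) H_{k-1}^α`. Hence `d/dt ‖v‖² = -2ε ‖D_x v‖²`, which integrates to an
energy identity; the second inequality is Bessel's inequality.
-/

open Polynomial Filter Topology

lemma integrable_mul_of_tendsto_cocompact {g h : ℝ → ℝ} (hg : Continuous g) {L : ℝ}
    (hgL : Tendsto g (cocompact ℝ) (𝓝 L)) (hh : Integrable h) :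
    Integrable fun x => g x * h x := by
  obtain ⟨C, hC⟩ := isBounded_iff_forall_norm_le.1
    (hg.isBounded_range_iff_isBigO.2 (hgL.isBigO_one ℝ))
  exact hh.bdd_mul hg.aestronglyMeasurable (.of_forall fun x => hC _ ⟨x, rfl⟩)

/-- `∫ f(u) u' = [Φ ∘ u]_{-∞}^{∞}` for a primitive `Φ` of `f`. -/
lemma integral_comp_mul_deriv_eq_zero {f u u' : ℝ → ℝ} (hf : Continuous f)
    (hu : ∀ x, HasDerivAt u (u' x) x) (hint : Integrable fun x => f (u x) * u' x) {L : ℝ}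
    (hL : Tendsto u (cocompact ℝ) (𝓝 L)) :
    ∫ x, f (u x) * u' x = 0 := by
  have hΦ : ∀ y, HasDerivAt (fun z => ∫ t in (0 : ℝ)..z, f t) (f y) y := fun y =>
    (hf.integral_hasStrictDerivAt 0 y).hasDerivAt
  have hlim : Tendsto (fun x => ∫ t in (0 : ℝ)..u x, f t) (cocompact ℝ)
      (𝓝 (∫ t in (0 : ℝ)..L, f t)) :=
    ((hΦ L).continuousAt.tendsto).comp hL
  rw [integral_of_hasDerivAt_of_tendsto (fun x => (hΦ (u x)).comp x (hu x)) hint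
    (hlim.mono_left atBot_le_cocompact) (hlim.mono_left atTop_le_cocompact), sub_self]

lemma MeasureTheory.MemLp.integral_mul_eq_inner {Ω : Type*} [MeasurableSpace Ω] {μ : Measure Ω}
    {u w : Ω → ℝ} (hu : MemLp u 2 μ) (hw : MemLp w 2 μ) :
    ∫ x, u x * w x ∂μ = inner ℝ (hw.toLp w) (hu.toLp u) := by
  rw [L2.inner_def]
  refine integral_congr_ae ?_
  filter_upwards [hu.coeFn_toLp, hw.coeFn_toLp] with x hux hwx
  simp [hux, hwx]

lemma sum_sq_integral_mul_le_integral_sq {Ω ι : Type*} [MeasurableSpace Ω] [DecidableEq ι]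
    {μ : Measure Ω} {e : ι → Ω → ℝ} (he : ∀ i, MemLp (e i) 2 μ)
    (horth : ∀ i j, ∫ x, e i x * e j x ∂μ = if i = j then 1 else 0)
    {u : Ω → ℝ} (hu : MemLp u 2 μ) (s : Finset ι) :
    ∑ i ∈ s, (∫ x, u x * e i x ∂μ) ^ 2 ≤ ∫ x, u x ^ 2 ∂μ := by
  have hon : Orthonormal ℝ fun i => (he i).toLp (e i) := by
    rw [orthonormal_iff_ite]
    intro i j
    rw [← (he j).integral_mul_eq_inner (he i), horth]
    exact if_congr eq_comm rfl rfl
  have hbessel := hon.sum_inner_products_le (x := hu.toLp u) (s := s)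
  simp only [Real.norm_eq_abs, sq_abs, ← real_inner_self_eq_norm_sq,
    ← hu.integral_mul_eq_inner (he _), ← hu.integral_mul_eq_inner hu] at hbessel
  simpa only [sq] using hbessel

noncomputable def physHermitePoly : ℕ → ℝ[X]
  | 0 => 1
  | n + 1 => 2 * X * physHermitePoly n - derivative (physHermitePoly n)

lemma physHermitePoly_succ (n : ℕ) :
    physHermitePoly (n + 1) = 2 * X * physHermitePoly n - derivative (physHermitePoly n) :=
  rfl

lemma derivative_physHermitePoly_succ (n : ℕ) :
    derivative (physHermitePoly (n + 1)) = C (2 * (n + 1 : ℝ)) * physHermitePoly n := by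
  induction n with
  | zero => simp [physHermitePoly, map_ofNat]
  | succ n ih =>
    rw [physHermitePoly_succ (n + 1), derivative_sub, derivative_mul, ih, derivative_C_mul]
    simp only [derivative_mul, derivative_X, derivative_ofNat, map_mul, map_add, map_ofNat,
      map_natCast, map_one, Nat.cast_add, Nat.cast_one]
    linear_combination (-(2 * n + 2) : ℝ[X]) * physHermitePoly_succ n

lemma derivative_physHermitePoly (n : ℕ) :
    derivative (physHermitePoly n) = C (2 * n : ℝ) * physHermitePoly (n - 1) := by
  cases n with
  | zero => simp [physHermitePoly]
  | succ n => simpa using derivative_physHermitePoly_succ n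

lemma two_mul_X_mul_physHermitePoly (n : ℕ) :
    2 * X * physHermitePoly n
      = physHermitePoly (n + 1) + C (2 * n : ℝ) * physHermitePoly (n - 1) := by
  rw [physHermitePoly_succ, derivative_physHermitePoly]
  ring

lemma physHermitePoly_sturmLiouville (n : ℕ) :
    2 * X * derivative (physHermitePoly n) - derivative (derivative (physHermitePoly n))
      = C (2 * n : ℝ) * physHermitePoly n := by
  cases n with
  | zero => simp [physHermitePoly]
  | succ n =>
    rw [derivative_physHermitePoly_succ, derivative_mul, derivative_C, physHermitePoly_succ n]
    push_cast
    ring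

lemma iteratedDeriv_exp_neg_sq (n : ℕ) :
    iteratedDeriv n (fun y => Real.exp (-(y ^ 2)))
      = fun x => (-1) ^ n * (physHermitePoly n).eval x * Real.exp (-(x ^ 2)) := by
  induction n with
  | zero => funext x; simp [physHermitePoly]
  | succ n ih =>
    funext x
    rw [iteratedDeriv_succ, ih]
    have hgauss : HasDerivAt (fun y => Real.exp (-(y ^ 2))) (Real.exp (-(x ^ 2)) * -(2 * x)) x := by
      simpa using ((hasDerivAt_pow 2 x).neg).exp
    rw [((((physHermitePoly n).hasDerivAt x).const_mul ((-1 : ℝ) ^ n)).fun_mul hgauss).deriv,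
      physHermitePoly_succ]
    simp only [eval_sub, eval_mul, eval_X, eval_ofNat]
    ring

lemma physHermite_eq_eval (n : ℕ) (x : ℝ) : physHermite n x = (physHermitePoly n).eval x := by
  rw [physHermite, iteratedDeriv_exp_neg_sq]
  have hexp : Real.exp (x ^ 2) * Real.exp (-(x ^ 2)) = 1 := by rw [← Real.exp_add]; simp
  calc (-1) ^ n * Real.exp (x ^ 2) * ((-1) ^ n * (physHermitePoly n).eval x * Real.exp (-(x ^ 2)))
      = ((-1) ^ n * (-1) ^ n) * (Real.exp (x ^ 2) * Real.exp (-(x ^ 2)))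
          * (physHermitePoly n).eval x := by ring
    _ = (physHermitePoly n).eval x := by rw [hexp, ← mul_pow]; norm_num

lemma integrable_eval_mul_exp_neg_mul_sq {b : ℝ} (hb : 0 < b) (p : ℝ[X]) :
    Integrable fun x => p.eval x * Real.exp (-b * x ^ 2) := by
  induction p using Polynomial.induction_on' with
  | add p q hp hq => simpa [add_mul] using hp.fun_add hq
  | monomial n a =>
    have h := integrable_rpow_mul_exp_neg_mul_sq hb (s := n) (by linarith [n.cast_nonneg (α := ℝ)])
    simpa [Real.rpow_natCast, mul_assoc] using h.const_mul a

lemma tendsto_eval_mul_exp_neg_mul_sq_cocompact {b : ℝ} (hb : 0 < b) (p : ℝ[X]) :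
    Tendsto (fun x => p.eval x * Real.exp (-b * x ^ 2)) (cocompact ℝ) (𝓝 0) := by
  induction p using Polynomial.induction_on' with
  | add p q hp hq => simpa [add_mul] using hp.add hq
  | monomial n a =>
    rw [tendsto_zero_iff_norm_tendsto_zero]
    have h := (tendsto_rpow_abs_mul_exp_neg_mul_sq_cocompact hb n).const_mul |a|
    simpa [Real.rpow_natCast, abs_mul, mul_assoc, abs_pow] using h

noncomputable def polyGauss (α : ℝ) (q : ℝ[X]) (x : ℝ) : ℝ :=
  q.eval (α * x) * Real.exp (-(α ^ 2 * x ^ 2) / 2)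

section polyGauss

variable {α : ℝ}

lemma polyGauss_sum {ι : Type*} (s : Finset ι) (q : ι → ℝ[X]) (x : ℝ) :
    polyGauss α (∑ i ∈ s, q i) x = ∑ i ∈ s, polyGauss α (q i) x := by
  simp only [polyGauss, eval_finsetSum, Finset.sum_mul]

lemma polyGauss_C_mul (a : ℝ) (q : ℝ[X]) (x : ℝ) :
    polyGauss α (C a * q) x = a * polyGauss α q x := by
  simp only [polyGauss, eval_mul, eval_C, mul_assoc]

lemma hasDerivAt_polyGauss (q : ℝ[X]) (x : ℝ) :
    HasDerivAt (polyGauss α q) (α * polyGauss α (derivative q - X * q) x) x := by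
  have hpoly : HasDerivAt (fun y => q.eval (α * y)) ((derivative q).eval (α * x) * α) x := by
    simpa [Function.comp_def] using (q.hasDerivAt (α * x)).comp x ((hasDerivAt_id x).const_mul α)
  have hgauss : HasDerivAt (fun y => Real.exp (-(α ^ 2 * y ^ 2) / 2))
      (Real.exp (-(α ^ 2 * x ^ 2) / 2) * (-(α ^ 2 * (2 * x)) / 2)) x := by
    simpa using ((((hasDerivAt_pow 2 x).const_mul (α ^ 2)).neg).div_const 2).exp
  refine (hpoly.fun_mul hgauss).congr_deriv ?_
  simp only [polyGauss, eval_sub, eval_mul, eval_X]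
  ring

lemma polyGauss_eq_eval_mul_exp (q : ℝ[X]) (x : ℝ) :
    polyGauss α q x = (q.comp (C α * X)).eval x * Real.exp (-(α ^ 2 / 2) * x ^ 2) := by
  simp only [polyGauss, eval_comp, eval_mul, eval_C, eval_X]
  ring_nf

lemma polyGauss_mul_polyGauss (q r : ℝ[X]) (x : ℝ) :
    polyGauss α q x * polyGauss α r x
      = ((q * r).comp (C α * X)).eval x * Real.exp (-α ^ 2 * x ^ 2) := by
  simp only [polyGauss, eval_comp, eval_mul, eval_C, eval_X]
  rw [show -α ^ 2 * x ^ 2 = -(α ^ 2 * x ^ 2) / 2 + -(α ^ 2 * x ^ 2) / 2 by ring, Real.exp_add]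
  ring

lemma integrable_polyGauss (hα : α ≠ 0) (q : ℝ[X]) : Integrable (polyGauss α q) := by
  simp only [funext (polyGauss_eq_eval_mul_exp (α := α) q)]
  exact integrable_eval_mul_exp_neg_mul_sq (by positivity) _

lemma integrable_polyGauss_mul_polyGauss (hα : α ≠ 0) (q r : ℝ[X]) :
    Integrable fun x => polyGauss α q x * polyGauss α r x := by
  simp only [polyGauss_mul_polyGauss]
  exact integrable_eval_mul_exp_neg_mul_sq (by positivity) _

lemma tendsto_polyGauss_cocompact (hα : α ≠ 0) (q : ℝ[X]) :
    Tendsto (polyGauss α q) (cocompact ℝ) (𝓝 0) := by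
  simp only [funext (polyGauss_eq_eval_mul_exp (α := α) q)]
  exact tendsto_eval_mul_exp_neg_mul_sq_cocompact (by positivity) _

lemma deriv_polyGauss (q : ℝ[X]) :
    deriv (polyGauss α q) = fun x => α * polyGauss α (derivative q - X * q) x :=
  funext fun x => (hasDerivAt_polyGauss q x).deriv

lemma integral_deriv_polyGauss_mul (hα : α ≠ 0) (q r : ℝ[X]) :
    ∫ x, deriv (polyGauss α q) x * polyGauss α r x
      = -∫ x, polyGauss α q x * deriv (polyGauss α r) x := by
  have hprod : Tendsto (fun x => polyGauss α q x * polyGauss α r x) (cocompact ℝ) (𝓝 0) := by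
    simpa using (tendsto_polyGauss_cocompact hα q).mul (tendsto_polyGauss_cocompact hα r)
  have hibp := integral_mul_deriv_eq_deriv_mul (fun x _ => hasDerivAt_polyGauss q x)
    (fun x _ => hasDerivAt_polyGauss r x)
    (((integrable_polyGauss_mul_polyGauss hα q (derivative r - X * r)).const_mul α).congr
      (.of_forall fun x => by simp only [Pi.mul_apply]; ring))
    (((integrable_polyGauss_mul_polyGauss hα (derivative q - X * q) r).const_mul α).congr
      (.of_forall fun x => by simp only [Pi.mul_apply]; ring))
    (hprod.mono_left atBot_le_cocompact) (hprod.mono_left atTop_le_cocompact)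
  simp only [deriv_polyGauss, sub_self, zero_sub] at hibp ⊢
  linarith

lemma SLop_polyGauss (q : ℝ[X]) (x : ℝ) :
    SLop α (polyGauss α q) x
      = α ^ 2 * polyGauss α (2 * X * derivative q - derivative (derivative q)) x := by
  have hpoly : ∀ (p : ℝ[X]) (y : ℝ),
      HasDerivAt (fun z => p.eval (α * z)) ((derivative p).eval (α * y) * α) y := fun p y => by
    simpa [Function.comp_def] using (p.hasDerivAt (α * y)).comp y ((hasDerivAt_id y).const_mul α)
  have hcancel : (fun z => Real.exp (α ^ 2 * z ^ 2 / 2) * polyGauss α q z)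
      = fun z => q.eval (α * z) := by
    funext z
    rw [polyGauss, mul_left_comm, ← Real.exp_add]
    ring_nf
    simp
  have hgauss : HasDerivAt (fun y => Real.exp (-(α ^ 2 * y ^ 2)))
      (Real.exp (-(α ^ 2 * x ^ 2)) * -(α ^ 2 * (2 * x))) x := by
    simpa using (((hasDerivAt_pow 2 x).const_mul (α ^ 2)).neg).exp
  have hexp : Real.exp (α ^ 2 * x ^ 2 / 2) * Real.exp (-(α ^ 2 * x ^ 2))
      = Real.exp (-(α ^ 2 * x ^ 2) / 2) := by
    rw [← Real.exp_add]; ring_nf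
  rw [SLop, hcancel]
  simp only [fun y => (hpoly q y).deriv]
  rw [(hgauss.fun_mul ((hpoly (derivative q) x).mul_const α)).deriv]
  simp only [polyGauss, eval_sub, eval_mul, eval_X, eval_ofNat]
  linear_combination (2 * α ^ 3 * x * (derivative q).eval (α * x)
    - α ^ 2 * (derivative (derivative q)).eval (α * x)) * hexp

end polyGauss

noncomputable def ladderCoeff (n : ℕ) : ℝ := √(n / 2)

lemma ladderCoeff_zero : ladderCoeff 0 = 0 := by simp [ladderCoeff]

lemma ladderCoeff_succ_pos (n : ℕ) : 0 < ladderCoeff (n + 1) := by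
  unfold ladderCoeff; positivity

lemma ladderCoeff_sq (n : ℕ) : ladderCoeff n ^ 2 = n / 2 := by
  unfold ladderCoeff; rw [Real.sq_sqrt (by positivity)]

noncomputable def hermiteNormConst (α : ℝ) (n : ℕ) : ℝ :=
  √(α / (2 ^ n * n.factorial * √π))

lemma hermiteNormConst_eq_succ (α : ℝ) (n : ℕ) :
    hermiteNormConst α n = 2 * ladderCoeff (n + 1) * hermiteNormConst α (n + 1) := by
  rw [hermiteNormConst, hermiteNormConst, ladderCoeff,
    show (2 : ℝ) = √4 by rw [show (4 : ℝ) = 2 ^ 2 by norm_num, Real.sqrt_sq zero_le_two],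
    ← Real.sqrt_mul (by norm_num), ← Real.sqrt_mul (by positivity)]
  congr 1
  push_cast [pow_succ, Nat.factorial_succ]
  field_simp
  ring

lemma natCast_mul_hermiteNormConst (α : ℝ) (n : ℕ) :
    n * hermiteNormConst α n = ladderCoeff n * hermiteNormConst α (n - 1) := by
  cases n with
  | zero => simp [ladderCoeff_zero]
  | succ n =>
    rw [Nat.add_sub_cancel, hermiteNormConst_eq_succ α n, ← mul_assoc, ← mul_assoc,
      mul_comm _ (2 : ℝ), mul_assoc 2, ← sq, ladderCoeff_sq]
    push_cast
    ring

lemma genHermite_eq_polyGauss (α : ℝ) (n : ℕ) :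
    genHermite α n = polyGauss α (C (hermiteNormConst α n) * physHermitePoly n) := by
  funext x
  simp [genHermite, polyGauss, hermiteNormConst, physHermite_eq_eval, mul_assoc]

section genHermite

variable {α : ℝ}

lemma mul_genHermite (n : ℕ) (x : ℝ) :
    α ^ 2 * x * genHermite α n x
      = α * (ladderCoeff n * genHermite α (n - 1) x
          + ladderCoeff (n + 1) * genHermite α (n + 1) x) := by
  have hX := congrArg (eval (α * x)) (two_mul_X_mul_physHermitePoly n)
  have h₁ := natCast_mul_hermiteNormConst α n
  have h₂ := hermiteNormConst_eq_succ α n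
  simp only [genHermite_eq_polyGauss, polyGauss, eval_mul, eval_add, eval_C, eval_X,
    eval_ofNat] at hX ⊢
  linear_combination (α * hermiteNormConst α n * Real.exp (-(α ^ 2 * x ^ 2) / 2) / 2) * hX
    + (α * (physHermitePoly (n - 1)).eval (α * x) * Real.exp (-(α ^ 2 * x ^ 2) / 2)) * h₁
    + (α * (physHermitePoly (n + 1)).eval (α * x) * Real.exp (-(α ^ 2 * x ^ 2) / 2) / 2) * h₂

lemma hasDerivAt_genHermite (n : ℕ) (x : ℝ) :
    HasDerivAt (genHermite α n)
      (α * (ladderCoeff n * genHermite α (n - 1) x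
        - ladderCoeff (n + 1) * genHermite α (n + 1) x)) x := by
  rw [genHermite_eq_polyGauss α n]
  refine (hasDerivAt_polyGauss _ x).congr_deriv ?_
  have hX := congrArg (eval (α * x)) (two_mul_X_mul_physHermitePoly n)
  have hD := congrArg (eval (α * x)) (derivative_physHermitePoly n)
  have h₁ := natCast_mul_hermiteNormConst α n
  have h₂ := hermiteNormConst_eq_succ α n
  simp only [genHermite_eq_polyGauss, polyGauss, derivative_C_mul, eval_mul, eval_sub, eval_add,
    eval_C, eval_X, eval_ofNat] at hX hD ⊢
  linear_combination (α * hermiteNormConst α n * Real.exp (-(α ^ 2 * x ^ 2) / 2)) * hD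
    - (α * hermiteNormConst α n * Real.exp (-(α ^ 2 * x ^ 2) / 2) / 2) * hX
    + (α * (physHermitePoly (n - 1)).eval (α * x) * Real.exp (-(α ^ 2 * x ^ 2) / 2)) * h₁
    - (α * (physHermitePoly (n + 1)).eval (α * x) * Real.exp (-(α ^ 2 * x ^ 2) / 2) / 2) * h₂

lemma deriv_genHermite (n : ℕ) :
    deriv (genHermite α n) = fun x => α * (ladderCoeff n * genHermite α (n - 1) x
      - ladderCoeff (n + 1) * genHermite α (n + 1) x) :=
  funext fun x => (hasDerivAt_genHermite n x).deriv

lemma deriv_add_mul_genHermite (n : ℕ) (x : ℝ) :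
    deriv (genHermite α n) x + α ^ 2 * x * genHermite α n x
      = 2 * α * ladderCoeff n * genHermite α (n - 1) x := by
  rw [deriv_genHermite, mul_genHermite]
  ring

lemma mul_sub_deriv_genHermite (n : ℕ) (x : ℝ) :
    α ^ 2 * x * genHermite α n x - deriv (genHermite α n) x
      = 2 * α * ladderCoeff (n + 1) * genHermite α (n + 1) x := by
  rw [deriv_genHermite, mul_genHermite]
  ring

lemma integrable_genHermite (hα : α ≠ 0) (n : ℕ) : Integrable (genHermite α n) := by
  rw [genHermite_eq_polyGauss]
  exact integrable_polyGauss hα _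

lemma integrable_genHermite_mul_genHermite (hα : α ≠ 0) (n m : ℕ) :
    Integrable fun x => genHermite α n x * genHermite α m x := by
  simp only [genHermite_eq_polyGauss]
  exact integrable_polyGauss_mul_polyGauss hα _ _

/-- The raising operator `α²x - ∂ₓ` is the adjoint of the lowering operator `∂ₓ + α²x`. -/
lemma ladderCoeff_mul_integral_genHermite (hα : α ≠ 0) (n m : ℕ) :
    ladderCoeff n * ∫ x, genHermite α (n - 1) x * genHermite α m x
      = ladderCoeff (m + 1) * ∫ x, genHermite α n x * genHermite α (m + 1) x := by
  set H := genHermite α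
  have hderiv : ∀ k l, Integrable fun x => deriv (H k) x * H l x := fun k l => by
    simp only [H, genHermite_eq_polyGauss, deriv_polyGauss, mul_assoc]
    exact (integrable_polyGauss_mul_polyGauss hα _ _).const_mul α
  have hlower : (fun x => (deriv (H n) x + α ^ 2 * x * H n x) * H m x)
      = fun x => 2 * α * ladderCoeff n * (H (n - 1) x * H m x) := by
    funext x; rw [deriv_add_mul_genHermite]; ring
  have hraise : (fun x => H n x * (α ^ 2 * x * H m x - deriv (H m) x))
      = fun x => 2 * α * ladderCoeff (m + 1) * (H n x * H (m + 1) x) := by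
    funext x; rw [mul_sub_deriv_genHermite]; ring
  have hibp : ∫ x, deriv (H n) x * H m x = -∫ x, H n x * deriv (H m) x := by
    simp only [H, genHermite_eq_polyGauss]
    exact integral_deriv_polyGauss_mul hα _ _
  have hlr : (∫ x, (deriv (H n) x + α ^ 2 * x * H n x) * H m x)
      = ∫ x, H n x * (α ^ 2 * x * H m x - deriv (H m) x) := by
    rw [← sub_eq_zero, ← integral_sub]
    · simp only [show ∀ x, (deriv (H n) x + α ^ 2 * x * H n x) * H m x
          - H n x * (α ^ 2 * x * H m x - deriv (H m) x)
          = deriv (H n) x * H m x + deriv (H m) x * H n x from fun x => by ring]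
      rw [integral_add (hderiv n m) (hderiv m n), hibp]
      simp only [mul_comm (deriv (H m) _)]
      ring
    · rw [hlower]; exact (integrable_genHermite_mul_genHermite hα _ _).const_mul _
    · rw [hraise]; exact (integrable_genHermite_mul_genHermite hα _ _).const_mul _
  rw [hlower, hraise, integral_const_mul, integral_const_mul] at hlr
  have h2α : 2 * α ≠ 0 := mul_ne_zero two_ne_zero hα
  apply mul_left_cancel₀ h2α
  linear_combination hlr

lemma continuous_genHermite (n : ℕ) : Continuous (genHermite α n) :=
  continuous_iff_continuousAt.2 fun x => (hasDerivAt_genHermite n x).continuousAt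

lemma memLp_genHermite (hα : α ≠ 0) (n : ℕ) : MemLp (genHermite α n) 2 := by
  refine (memLp_two_iff_integrable_sq (continuous_genHermite n).aestronglyMeasurable).2 ?_
  simpa only [sq] using integrable_genHermite_mul_genHermite hα n n

lemma integral_genHermite_zero_mul_self (hα : 0 < α) :
    ∫ x, genHermite α 0 x * genHermite α 0 x = 1 := by
  simp only [genHermite_eq_polyGauss, polyGauss_mul_polyGauss, physHermitePoly, mul_one,
    ← C_mul, C_comp, eval_C]
  rw [integral_const_mul, integral_gaussian, hermiteNormConst, Real.mul_self_sqrt (by positivity),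
    Real.sqrt_div' _ (sq_nonneg α), Real.sqrt_sq hα.le]
  field_simp
  simp

lemma integral_genHermite_mul_genHermite (hα : 0 < α) (n m : ℕ) :
    ∫ x, genHermite α n x * genHermite α m x = if n = m then 1 else 0 := by
  have hladder := ladderCoeff_mul_integral_genHermite hα.ne'
  have hzero_succ : ∀ m, ∫ x, genHermite α 0 x * genHermite α (m + 1) x = 0 := fun m => by
    have h := hladder 0 m
    rw [ladderCoeff_zero, zero_mul, eq_comm, mul_eq_zero] at h
    simpa [(ladderCoeff_succ_pos m).ne'] using h
  induction n generalizing m with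
  | zero =>
    cases m with
    | zero => simpa using integral_genHermite_zero_mul_self hα
    | succ m => simpa using hzero_succ m
  | succ n ih =>
    cases m with
    | zero =>
      simp_rw [mul_comm (genHermite α (n + 1) _)]
      simpa using hzero_succ n
    | succ m =>
      have h := hladder (n + 1) m
      rw [Nat.add_sub_cancel, ih m] at h
      by_cases hnm : n = m
      · subst hnm
        simpa [(ladderCoeff_succ_pos n).ne'] using h.symm
      · simp only [hnm, if_false, mul_zero, zero_eq_mul, (ladderCoeff_succ_pos m).ne',
          false_or] at h
        simp [h, hnm]

end genHermite

noncomputable def hermiteSum (α : ℝ) (s : Finset ℕ) (a : ℕ → ℝ) (x : ℝ) : ℝ :=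
  ∑ k ∈ s, a k * genHermite α k x

section hermiteSum

variable {α : ℝ}

lemma hermiteSum_apply (s : Finset ℕ) (a : ℕ → ℝ) (x : ℝ) :
    hermiteSum α s a x = ∑ k ∈ s, a k * genHermite α k x :=
  rfl

lemma hermiteSum_eq_polyGauss (s : Finset ℕ) (a : ℕ → ℝ) :
    hermiteSum α s a
      = polyGauss α (∑ k ∈ s, C (a k) * (C (hermiteNormConst α k) * physHermitePoly k)) := by
  funext x
  simp only [hermiteSum, polyGauss_sum, polyGauss_C_mul, genHermite_eq_polyGauss]

lemma hasDerivAt_hermiteSum (s : Finset ℕ) (a : ℕ → ℝ) (x : ℝ) :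
    HasDerivAt (hermiteSum α s a) (∑ k ∈ s, a k * (α * (ladderCoeff k * genHermite α (k - 1) x
      - ladderCoeff (k + 1) * genHermite α (k + 1) x))) x :=
  HasDerivAt.fun_sum fun k _ => (hasDerivAt_genHermite k x).const_mul (a k)

lemma continuous_hermiteSum (s : Finset ℕ) (a : ℕ → ℝ) : Continuous (hermiteSum α s a) :=
  continuous_iff_continuousAt.2 fun x => (hasDerivAt_hermiteSum s a x).continuousAt

lemma tendsto_hermiteSum_cocompact (hα : α ≠ 0) (s : Finset ℕ) (a : ℕ → ℝ) :
    Tendsto (hermiteSum α s a) (cocompact ℝ) (𝓝 0) := by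
  rw [hermiteSum_eq_polyGauss]
  exact tendsto_polyGauss_cocompact hα _

lemma integrable_hermiteSum_mul_genHermite (hα : α ≠ 0) (s : Finset ℕ) (a : ℕ → ℝ) (n : ℕ) :
    Integrable fun x => hermiteSum α s a x * genHermite α n x := by
  rw [hermiteSum_eq_polyGauss, genHermite_eq_polyGauss]
  exact integrable_polyGauss_mul_polyGauss hα _ _

lemma integrable_deriv_hermiteSum (hα : α ≠ 0) (s : Finset ℕ) (a : ℕ → ℝ) :
    Integrable (deriv (hermiteSum α s a)) := by
  rw [hermiteSum_eq_polyGauss, deriv_polyGauss]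
  exact (integrable_polyGauss hα _).const_mul α

lemma integral_hermiteSum_mul_genHermite (hα : 0 < α) (s : Finset ℕ) (a : ℕ → ℝ) (j : ℕ) :
    ∫ x, hermiteSum α s a x * genHermite α j x = if j ∈ s then a j else 0 := by
  simp only [hermiteSum, Finset.sum_mul, mul_assoc]
  rw [integral_finsetSum _ fun k _ => (integrable_genHermite_mul_genHermite hα.ne' k j).const_mul _]
  simp only [integral_const_mul, integral_genHermite_mul_genHermite hα, mul_ite, mul_one, mul_zero,
    Finset.sum_ite_eq']

lemma integral_hermiteSum_mul_hermiteSum (hα : 0 < α) (s : Finset ℕ) (a b : ℕ → ℝ) :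
    ∫ x, hermiteSum α s a x * hermiteSum α s b x = ∑ k ∈ s, a k * b k := by
  conv_lhs => enter [2, x, 2]; rw [hermiteSum]
  simp only [Finset.mul_sum, mul_left_comm _ (b _)]
  rw [integral_finsetSum _ fun k _ => ?_]
  · simp only [integral_const_mul, integral_hermiteSum_mul_genHermite hα]
    exact Finset.sum_congr rfl fun k hk => by rw [if_pos hk, mul_comm]
  · exact (integrable_hermiteSum_mul_genHermite hα.ne' s a k).const_mul _

lemma integral_hermiteSum_sq (hα : 0 < α) (s : Finset ℕ) (a : ℕ → ℝ) :
    ∫ x, hermiteSum α s a x ^ 2 = ∑ k ∈ s, a k ^ 2 := by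
  simpa only [sq] using integral_hermiteSum_mul_hermiteSum hα s a a

lemma SLop_hermiteSum (s : Finset ℕ) (a : ℕ → ℝ) :
    SLop α (hermiteSum α s a) = hermiteSum α s fun k => 2 * k * α ^ 2 * a k := by
  funext x
  rw [hermiteSum_eq_polyGauss, SLop_polyGauss, hermiteSum_eq_polyGauss]
  simp only [derivative_sum, derivative_C_mul, Finset.mul_sum, ← Finset.sum_sub_distrib]
  simp only [mul_left_comm (2 * X : ℝ[X]) (C _), ← mul_sub, physHermitePoly_sturmLiouville,
    polyGauss_sum, polyGauss_C_mul, Finset.mul_sum]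
  exact Finset.sum_congr rfl fun k _ => by ring

lemma Dx_hermiteSum (N : ℕ) (a : ℕ → ℝ) :
    Dx α (hermiteSum α (Finset.range (N + 1)) a)
      = hermiteSum α (Finset.range N) fun k => 2 * α * ladderCoeff (k + 1) * a (k + 1) := by
  funext x
  have hlower : ∀ k, a k * (α * (ladderCoeff k * genHermite α (k - 1) x
        - ladderCoeff (k + 1) * genHermite α (k + 1) x)) + α ^ 2 * x * (a k * genHermite α k x)
      = 2 * α * ladderCoeff k * a k * genHermite α (k - 1) x := fun k => by
    have h := deriv_add_mul_genHermite (α := α) k x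
    rw [deriv_genHermite] at h
    linear_combination a k * h
  rw [Dx, (hasDerivAt_hermiteSum _ a x).deriv, hermiteSum, Finset.mul_sum,
    ← Finset.sum_add_distrib]
  simp only [hlower]
  rw [Finset.sum_range_succ', ladderCoeff_zero]
  simp [hermiteSum, mul_assoc]

lemma integral_Dx_hermiteSum_sq (hα : 0 < α) (N : ℕ) (a : ℕ → ℝ) :
    ∫ x, Dx α (hermiteSum α (Finset.range (N + 1)) a) x ^ 2
      = ∑ k ∈ Finset.range (N + 1), 2 * k * α ^ 2 * a k ^ 2 := by
  rw [Dx_hermiteSum, integral_hermiteSum_sq hα, Finset.sum_range_succ' _ N]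
  simp only [mul_pow, ladderCoeff_sq]
  push_cast
  simp only [mul_zero, zero_mul, add_zero]
  exact Finset.sum_congr rfl fun k _ => by ring

end hermiteSum

section flux

variable {α : ℝ}

lemma integral_mul_deriv_hermiteSum {h : ℝ → ℝ}
    (hh : ∀ n, Integrable fun x => h x * genHermite α n x) (s : Finset ℕ) (c : ℕ → ℝ) :
    ∫ x, h x * deriv (hermiteSum α s c) x
      = ∑ k ∈ s, c k * (α * (ladderCoeff k * (∫ x, h x * genHermite α (k - 1) x)
          - ladderCoeff (k + 1) * ∫ x, h x * genHermite α (k + 1) x)) := by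
  have hexpand : ∀ x, h x * deriv (hermiteSum α s c) x
      = ∑ k ∈ s, (c k * α * ladderCoeff k * (h x * genHermite α (k - 1) x)
          - c k * α * ladderCoeff (k + 1) * (h x * genHermite α (k + 1) x)) := fun x => by
    rw [(hasDerivAt_hermiteSum s c x).deriv, Finset.mul_sum]
    exact Finset.sum_congr rfl fun k _ => by ring
  simp only [hexpand]
  rw [integral_finsetSum _ fun k _ => ?_]
  · refine Finset.sum_congr rfl fun k _ => ?_
    rw [integral_sub ((hh _).const_mul _) ((hh _).const_mul _), integral_const_mul,
      integral_const_mul]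
    ring
  · exact ((hh _).const_mul _).sub ((hh _).const_mul _)

lemma integral_deriv_projection_mul_eq_zero (hα : 0 < α) {f : ℝ → ℝ} (hf : Continuous f)
    (N : ℕ) (c : ℕ → ℝ) :
    ∫ x, deriv (hermiteSum α (Finset.range (N + 2))
          fun n => ∫ y, f (hermiteSum α (Finset.range (N + 1)) c y) * genHermite α n y) x
        * hermiteSum α (Finset.range (N + 1)) c x = 0 := by
  have hu_lim := tendsto_hermiteSum_cocompact hα.ne' (Finset.range (N + 1)) c
  have hfu : ∀ {h : ℝ → ℝ}, Integrable h →
      Integrable fun x => f (hermiteSum α (Finset.range (N + 1)) c x) * h x :=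
    integrable_mul_of_tendsto_cocompact (hf.comp (continuous_hermiteSum _ c))
      ((hf.tendsto 0).comp hu_lim)
  have hproj : ∀ j < N + 2, ∫ x, hermiteSum α (Finset.range (N + 2))
        (fun n => ∫ y, f (hermiteSum α (Finset.range (N + 1)) c y) * genHermite α n y) x
          * genHermite α j x
      = ∫ x, f (hermiteSum α (Finset.range (N + 1)) c x) * genHermite α j x := fun j hj => by
    rw [integral_hermiteSum_mul_genHermite hα, if_pos (Finset.mem_range.2 hj)]
  calc _ = -∫ x, hermiteSum α (Finset.range (N + 2))
          (fun n => ∫ y, f (hermiteSum α (Finset.range (N + 1)) c y) * genHermite α n y) x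
          * deriv (hermiteSum α (Finset.range (N + 1)) c) x := by
        rw [hermiteSum_eq_polyGauss, hermiteSum_eq_polyGauss]
        exact integral_deriv_polyGauss_mul hα.ne' _ _
    _ = -∫ x, f (hermiteSum α (Finset.range (N + 1)) c x)
          * deriv (hermiteSum α (Finset.range (N + 1)) c) x := by
        rw [integral_mul_deriv_hermiteSum (integrable_hermiteSum_mul_genHermite hα.ne' _ _),
          integral_mul_deriv_hermiteSum fun n => hfu (integrable_genHermite hα.ne' n)]
        congr 1
        refine Finset.sum_congr rfl fun k hk => ?_
        have hk := Finset.mem_range.1 hk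
        rw [hproj (k - 1) (by omega), hproj (k + 1) (by omega)]
    _ = 0 := by
        rw [integral_comp_mul_deriv_eq_zero hf
          (fun x => (hasDerivAt_hermiteSum _ c x).differentiableAt.hasDerivAt)
          (hfu (integrable_deriv_hermiteSum hα.ne' _ c)) hu_lim, neg_zero]

end flux

lemma energy_identity_of_hasDerivAt {N : ℕ} {T ε : ℝ} (hT : 0 ≤ T) {a a' : ℕ → ℝ → ℝ}
    (w : ℕ → ℝ) (ha : ∀ k ≤ N, ∀ t ∈ Set.Icc 0 T, HasDerivAt (a k) (a' k t) t)
    (hode : ∀ t ∈ Set.Icc 0 T, ∑ k ∈ Finset.range (N + 1), a' k t * a k t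
      + ε * ∑ k ∈ Finset.range (N + 1), w k * a k t * a k t = 0) :
    ∑ k ∈ Finset.range (N + 1), a k T ^ 2
        + 2 * ε * ∫ t in (0 : ℝ)..T, ∑ k ∈ Finset.range (N + 1), w k * a k t ^ 2
      = ∑ k ∈ Finset.range (N + 1), a k 0 ^ 2 := by
  have ha' : ∀ k ∈ Finset.range (N + 1), ∀ t ∈ Set.uIcc 0 T, HasDerivAt (a k) (a' k t) t :=
    fun k hk t ht => ha k (Nat.lt_succ_iff.1 (Finset.mem_range.1 hk)) t
      (by rwa [Set.uIcc_of_le hT] at ht)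
  have hderiv : ∀ t ∈ Set.uIcc 0 T, HasDerivAt (fun s => ∑ k ∈ Finset.range (N + 1), a k s ^ 2)
      (-(2 * ε) * ∑ k ∈ Finset.range (N + 1), w k * a k t ^ 2) t := fun t ht => by
    refine (HasDerivAt.fun_sum fun k hk => (ha' k hk t ht).pow 2).congr_deriv ?_
    have h := hode t (by rwa [Set.uIcc_of_le hT] at ht)
    simp only [Nat.cast_ofNat, Nat.add_one_sub_one, pow_one, mul_assoc, ← sq] at h ⊢
    rw [← Finset.mul_sum, Finset.sum_congr rfl fun k _ => mul_comm (a k t) (a' k t)]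
    linear_combination 2 * h
  have hcont : ContinuousOn (fun t => ∑ k ∈ Finset.range (N + 1), w k * a k t ^ 2)
      (Set.uIcc 0 T) :=
    continuousOn_finsetSum _ fun k hk t ht =>
      (continuousAt_const.mul ((ha' k hk t ht).continuousAt.pow 2)).continuousWithinAt
  have hftc := intervalIntegral.integral_eq_sub_of_hasDerivAt hderiv
    (hcont.intervalIntegrable.const_mul _)
  rw [intervalIntegral.integral_const_mul] at hftc
  linarith

theorem energy_estimate_L_general (α T ε : ℝ) (hα : 0 < α) (hT : 0 < T) (N : ℕ)
    (f : ℝ → ℝ) (hf : ContDiff ℝ 1 f)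
    (u₀ : ℝ → ℝ) (hu₀ : MemLp u₀ 2 (volume : Measure ℝ))
    (vh vh' : ℕ → ℝ → ℝ)
    (hvh : ∀ k ≤ N, ∀ t ∈ Set.Icc (0 : ℝ) T, HasDerivAt (vh k) (vh' k t) t)
    (v : ℝ → ℝ → ℝ)
    (hv : v = fun t x => ∑ k ∈ Finset.range (N + 1), vh k t * genHermite α k x)
    (hinit : ∀ x : ℝ, v 0 x
      = ∑ n ∈ Finset.range (N + 1), (∫ y : ℝ, u₀ y * genHermite α n y) * genHermite α n x)
    (hscheme : ∀ t ∈ Set.Icc (0 : ℝ) T, ∀ c : ℕ → ℝ,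
      (∫ x : ℝ, (∑ k ∈ Finset.range (N + 1), vh' k t * genHermite α k x) *
          (∑ j ∈ Finset.range (N + 1), c j * genHermite α j x))
        + (∫ x : ℝ, deriv (fun z => ∑ n ∈ Finset.range (N + 2),
              (∫ y : ℝ, f (v t y) * genHermite α n y) * genHermite α n z) x *
            (∑ j ∈ Finset.range (N + 1), c j * genHermite α j x))
        + ε * (∫ x : ℝ, SLop α (v t) x *
            (∑ j ∈ Finset.range (N + 1), c j * genHermite α j x)) = 0) :
    (∫ x : ℝ, (v T x) ^ 2)
          + 2 * ε * ∫ t in (0 : ℝ)..T, ∫ x : ℝ, (Dx α (v t) x) ^ 2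
        ≤ ∫ x : ℝ, (∑ n ∈ Finset.range (N + 1),
            (∫ y : ℝ, u₀ y * genHermite α n y) * genHermite α n x) ^ 2
      ∧ (∫ x : ℝ, (∑ n ∈ Finset.range (N + 1),
            (∫ y : ℝ, u₀ y * genHermite α n y) * genHermite α n x) ^ 2)
        ≤ ∫ x : ℝ, (u₀ x) ^ 2 := by
  subst hv
  simp only [← hermiteSum_apply] at hscheme hinit ⊢
  eta_reduce at hscheme ⊢
  have henergy := energy_identity_of_hasDerivAt hT.le (fun k => 2 * k * α ^ 2) hvh fun t ht => by
    simpa only [integral_hermiteSum_mul_hermiteSum hα, SLop_hermiteSum, add_zero,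
      integral_deriv_projection_mul_eq_zero hα hf.continuous] using hscheme t ht (vh · t)
  refine ⟨?_, ?_⟩
  · rw [← funext hinit]
    simpa only [integral_hermiteSum_sq hα, integral_Dx_hermiteSum_sq hα] using henergy.le
  · rw [integral_hermiteSum_sq hα]
    exact sum_sq_integral_mul_le_integral_sq (memLp_genHermite hα.ne')
      (integral_genHermite_mul_genHermite hα) hu₀ _

/-- energy estimate for the Hermite spectral viscosity scheme with
viscosity term `ε L_α v`: if `v(t) = Σ_{k=0}^N v̂_k(t) H_k^α` solves the scheme weakly
against every `φ ∈ R_N` on `[0,T]` with initial datum `P_N u₀`, then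
`‖v(T)‖² + 2ε ∫₀ᵀ ‖D_x v(t)‖² dt ≤ ‖P_N u₀‖² ≤ ‖u₀‖²`. -/
theorem energy_estimate_L (α T ε : ℝ) (hα : 0 < α) (hT : 0 < T) (hε : 0 < ε) (N : ℕ)
    (f : ℝ → ℝ) (hf : ContDiff ℝ 1 f) (hf0 : f 0 = 0)
    (F : ℝ → ℝ) (hF : ∀ y : ℝ, HasDerivAt F (y * deriv f y) y)
    (u₀ : ℝ → ℝ) (hu₀ : MemLp u₀ 2 (volume : Measure ℝ))
    (vh vh' : ℕ → ℝ → ℝ)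
    (hvh : ∀ k ≤ N, ∀ t ∈ Set.Icc (0 : ℝ) T, HasDerivAt (vh k) (vh' k t) t)
    (v : ℝ → ℝ → ℝ)
    (hv : v = fun t x => ∑ k ∈ Finset.range (N + 1), vh k t * genHermite α k x)
    (hinit : ∀ x : ℝ, v 0 x
      = ∑ n ∈ Finset.range (N + 1), (∫ y : ℝ, u₀ y * genHermite α n y) * genHermite α n x)
    (hscheme : ∀ t ∈ Set.Icc (0 : ℝ) T, ∀ c : ℕ → ℝ,
      (∫ x : ℝ, (∑ k ∈ Finset.range (N + 1), vh' k t * genHermite α k x) *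
          (∑ j ∈ Finset.range (N + 1), c j * genHermite α j x))
        + (∫ x : ℝ, deriv (fun z => ∑ n ∈ Finset.range (N + 2),
              (∫ y : ℝ, f (v t y) * genHermite α n y) * genHermite α n z) x *
            (∑ j ∈ Finset.range (N + 1), c j * genHermite α j x))
        + ε * (∫ x : ℝ, SLop α (v t) x *
            (∑ j ∈ Finset.range (N + 1), c j * genHermite α j x)) = 0) :
    (∫ x : ℝ, (v T x) ^ 2)
          + 2 * ε * ∫ t in (0 : ℝ)..T, ∫ x : ℝ, (Dx α (v t) x) ^ 2
        ≤ ∫ x : ℝ, (∑ n ∈ Finset.range (N + 1),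
            (∫ y : ℝ, u₀ y * genHermite α n y) * genHermite α n x) ^ 2
      ∧ (∫ x : ℝ, (∑ n ∈ Finset.range (N + 1),
            (∫ y : ℝ, u₀ y * genHermite α n y) * genHermite α n x) ^ 2)
        ≤ ∫ x : ℝ, (u₀ x) ^ 2 :=
  energy_estimate_L_general α T ε hα hT N f hf u₀ hu₀ vh vh' hvh v hv hinit hscheme
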